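/- A filter in an inverse semigroup contains an idempotent if and only if it is an inverse subsemigroup. -/
import Mathlib


class InvSemigroup (S : Type*) extends Mul S, Inv S where
  mul_assoc : ∀ a b c : S, a * b * c = a * (b * c)
  mul_inv_mul : ∀ a : S, a * a⁻¹ * a = a
  inv_mul_inv : ∀ a : S, a⁻¹ * a * a⁻¹ = a⁻¹
  idem_comm : ∀ e f : S, e * e = e → f * f = f → e * f = f * e

/-- The natural partial order on an inverse semigroup: `a ≤ b` iff `a = b * (a⁻¹ * a)`. -/
def nle {S : Type*} [InvSemigroup S] (a b : S) : Prop := a = b * (a⁻¹ * a)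

section Aux
variable {S : Type*} [InvSemigroup S]

instance : Semigroup S := { mul_assoc := InvSemigroup.mul_assoc }

open InvSemigroup (mul_inv_mul inv_mul_inv idem_comm)

lemma idem_inv_mul (a : S) : (a⁻¹ * a) * (a⁻¹ * a) = a⁻¹ * a := by
  calc (a⁻¹ * a) * (a⁻¹ * a) = (a⁻¹ * a * a⁻¹) * a := by simp [mul_assoc]
    _ = a⁻¹ * a := by rw [inv_mul_inv]

lemma idem_mul_inv (a : S) : (a * a⁻¹) * (a * a⁻¹) = a * a⁻¹ := by
  calc (a * a⁻¹) * (a * a⁻¹) = (a * a⁻¹ * a) * a⁻¹ := by simp [mul_assoc]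
    _ = a * a⁻¹ := by rw [mul_inv_mul]

lemma inv_unique' {a b c : S} (h1 : a * b * a = a) (h2 : b * a * b = b)
    (h3 : a * c * a = a) (h4 : c * a * c = c) : b = c := by
  have iab : (a * b) * (a * b) = a * b := by
    calc (a * b) * (a * b) = (a * b * a) * b := by simp [mul_assoc]
      _ = a * b := by rw [h1]
  have iac : (a * c) * (a * c) = a * c := by
    calc (a * c) * (a * c) = (a * c * a) * c := by simp [mul_assoc]
      _ = a * c := by rw [h3]
  have iba : (b * a) * (b * a) = b * a := by
    calc (b * a) * (b * a) = (b * a * b) * a := by simp [mul_assoc]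
      _ = b * a := by rw [h2]
  have ica : (c * a) * (c * a) = c * a := by
    calc (c * a) * (c * a) = (c * a * c) * a := by simp [mul_assoc]
      _ = c * a := by rw [h4]
  have hb : b = b * (a * c) := by
    conv_lhs => rw [← h2, ← h3]
    calc b * (a * c * a) * b = b * ((a * c) * (a * b)) := by simp [mul_assoc]
      _ = b * ((a * b) * (a * c)) := by rw [idem_comm _ _ iac iab]
      _ = (b * a * b) * (a * c) := by simp [mul_assoc]
      _ = b * (a * c) := by rw [h2]
  have hc : c = c * (a * b) := by
    conv_lhs => rw [← h4, ← h1]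
    calc c * (a * b * a) * c = c * ((a * b) * (a * c)) := by simp [mul_assoc]
      _ = c * ((a * c) * (a * b)) := by rw [idem_comm _ _ iab iac]
      _ = (c * a * c) * (a * b) := by simp [mul_assoc]
      _ = c * (a * b) := by rw [h4]
  calc b = b * (a * c) := hb
    _ = b * (a * (c * (a * b))) := by rw [← hc]
    _ = ((b * a) * (c * a)) * b := by simp [mul_assoc]
    _ = ((c * a) * (b * a)) * b := by rw [idem_comm _ _ iba ica]
    _ = c * a * (b * a * b) := by simp [mul_assoc]
    _ = c * (a * b) := by rw [h2]; simp [mul_assoc]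
    _ = c := hc.symm

lemma inv_invol (a : S) : a⁻¹⁻¹ = a :=
  inv_unique' (InvSemigroup.mul_inv_mul a⁻¹) (InvSemigroup.inv_mul_inv a⁻¹)
    (InvSemigroup.inv_mul_inv a) (InvSemigroup.mul_inv_mul a)

lemma inv_idem {e : S} (he : e * e = e) : e⁻¹ = e :=
  inv_unique' (InvSemigroup.mul_inv_mul e) (InvSemigroup.inv_mul_inv e)
    (by rw [he, he]) (by rw [he, he])

lemma mul_inv_rev' (a b : S) : (a * b)⁻¹ = b⁻¹ * a⁻¹ := by
  have h1 : (a * b) * (b⁻¹ * a⁻¹) * (a * b) = a * b := by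
    calc (a * b) * (b⁻¹ * a⁻¹) * (a * b) = a * ((b * b⁻¹) * (a⁻¹ * a)) * b := by
          simp [mul_assoc]
      _ = a * ((a⁻¹ * a) * (b * b⁻¹)) * b := by
          rw [idem_comm _ _ (idem_mul_inv b) (idem_inv_mul a)]
      _ = (a * a⁻¹ * a) * (b * b⁻¹ * b) := by simp [mul_assoc]
      _ = a * b := by rw [mul_inv_mul, mul_inv_mul]
  have h2 : (b⁻¹ * a⁻¹) * (a * b) * (b⁻¹ * a⁻¹) = b⁻¹ * a⁻¹ := by
    calc (b⁻¹ * a⁻¹) * (a * b) * (b⁻¹ * a⁻¹) = b⁻¹ * ((a⁻¹ * a) * (b * b⁻¹)) * a⁻¹ := by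
          simp [mul_assoc]
      _ = b⁻¹ * ((b * b⁻¹) * (a⁻¹ * a)) * a⁻¹ := by
          rw [idem_comm _ _ (idem_inv_mul a) (idem_mul_inv b)]
      _ = (b⁻¹ * b * b⁻¹) * (a⁻¹ * a * a⁻¹) := by simp [mul_assoc]
      _ = b⁻¹ * a⁻¹ := by rw [inv_mul_inv, inv_mul_inv]
  exact inv_unique' (InvSemigroup.mul_inv_mul (a * b))
    (InvSemigroup.inv_mul_inv (a * b)) h1 h2

/-- `nle a b` iff `a = b * f` for some idempotent `f`. -/
lemma nle_iff {a b : S} : nle a b ↔ ∃ f : S, f * f = f ∧ a = b * f := by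
  constructor
  · intro h; exact ⟨a⁻¹ * a, idem_inv_mul a, h⟩
  · rintro ⟨f, hf, rfl⟩
    unfold nle
    rw [mul_inv_rev', inv_idem hf]
    have : b * (f * b⁻¹ * (b * f)) = b * f := by
      calc b * (f * b⁻¹ * (b * f)) = b * (f * (b⁻¹ * b)) * f := by simp [mul_assoc]
        _ = b * ((b⁻¹ * b) * f) * f := by rw [idem_comm _ _ hf (idem_inv_mul b)]
        _ = (b * b⁻¹ * b) * (f * f) := by simp [mul_assoc]
        _ = b * f := by rw [InvSemigroup.mul_inv_mul, hf]
    exact this.symm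

lemma nle_refl (a : S) : nle a a := by
  unfold nle
  rw [← mul_assoc, mul_inv_mul]

lemma nle_trans {a b c : S} (h1 : nle a b) (h2 : nle b c) : nle a c := by
  rw [nle_iff] at *
  obtain ⟨f, hf, rfl⟩ := h1
  obtain ⟨g, hg, rfl⟩ := h2
  refine ⟨g * f, ?_, by simp [mul_assoc]⟩
  calc (g * f) * (g * f) = g * (f * g) * f := by simp [mul_assoc]
    _ = g * (g * f) * f := by rw [idem_comm _ _ hf hg]
    _ = (g * g) * (f * f) := by simp [mul_assoc]
    _ = g * f := by rw [hf, hg]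

lemma nle_mul {a b c d : S} (h1 : nle a b) (h2 : nle c d) : nle (a * c) (b * d) := by
  rw [nle_iff] at *
  obtain ⟨e, he, rfl⟩ := h1
  obtain ⟨f, hf, rfl⟩ := h2
  have hded : (d⁻¹ * e * d) * (d⁻¹ * e * d) = d⁻¹ * e * d := by
    calc (d⁻¹ * e * d) * (d⁻¹ * e * d) = d⁻¹ * (e * (d * d⁻¹)) * (e * d) := by simp [mul_assoc]
      _ = d⁻¹ * ((d * d⁻¹) * e) * (e * d) := by rw [idem_comm _ _ he (idem_mul_inv d)]
      _ = (d⁻¹ * d * d⁻¹) * (e * e) * d := by simp [mul_assoc]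
      _ = d⁻¹ * e * d := by rw [InvSemigroup.inv_mul_inv, he]
  have hed : d * (d⁻¹ * e * d) = e * d := by
    calc d * (d⁻¹ * e * d) = (d * d⁻¹) * e * d := by simp [mul_assoc]
      _ = e * (d * d⁻¹) * d := by rw [idem_comm _ _ (idem_mul_inv d) he]
      _ = e * d := by rw [mul_assoc, InvSemigroup.mul_inv_mul]
  refine ⟨(d⁻¹ * e * d) * f, ?_, ?_⟩
  · calc ((d⁻¹ * e * d) * f) * ((d⁻¹ * e * d) * f)
        = (d⁻¹ * e * d) * (f * (d⁻¹ * e * d)) * f := by simp [mul_assoc]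
      _ = (d⁻¹ * e * d) * ((d⁻¹ * e * d) * f) * f := by rw [idem_comm _ _ hf hded]
      _ = ((d⁻¹ * e * d) * (d⁻¹ * e * d)) * (f * f) := by simp [mul_assoc]
      _ = (d⁻¹ * e * d) * f := by rw [hded, hf]
  · calc (b * e) * (d * f) = b * (e * d) * f := by simp [mul_assoc]
      _ = b * (d * (d⁻¹ * e * d)) * f := by rw [← hed]
      _ = b * d * ((d⁻¹ * e * d) * f) := by simp [mul_assoc]

lemma nle_inv {a b : S} (h : nle a b) : nle a⁻¹ b⁻¹ := by
  rw [nle_iff] at *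
  obtain ⟨f, hf, rfl⟩ := h
  have hbfb : (b * f * b⁻¹) * (b * f * b⁻¹) = b * f * b⁻¹ := by
    calc (b * f * b⁻¹) * (b * f * b⁻¹) = b * (f * (b⁻¹ * b)) * (f * b⁻¹) := by simp [mul_assoc]
      _ = b * ((b⁻¹ * b) * f) * (f * b⁻¹) := by rw [idem_comm _ _ hf (idem_inv_mul b)]
      _ = (b * b⁻¹ * b) * (f * f) * b⁻¹ := by simp [mul_assoc]
      _ = b * f * b⁻¹ := by rw [InvSemigroup.mul_inv_mul, hf]
  refine ⟨b * f * b⁻¹, hbfb, ?_⟩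
  rw [mul_inv_rev', inv_idem hf]
  have : b⁻¹ * (b * f * b⁻¹) = f * b⁻¹ := by
    calc b⁻¹ * (b * f * b⁻¹) = (b⁻¹ * b) * f * b⁻¹ := by simp [mul_assoc]
      _ = f * (b⁻¹ * b) * b⁻¹ := by rw [idem_comm _ _ (idem_inv_mul b) hf]
      _ = f * b⁻¹ := by rw [mul_assoc, InvSemigroup.inv_mul_inv]
  exact this.symm

lemma idem_of_nle_idem {a e : S} (he : e * e = e) (h : nle a e) : a * a = a := by
  rw [nle_iff] at h
  obtain ⟨f, hf, rfl⟩ := h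
  calc (e * f) * (e * f) = e * (f * e) * f := by simp [mul_assoc]
    _ = e * (e * f) * f := by rw [idem_comm _ _ hf he]
    _ = (e * e) * (f * f) := by simp [mul_assoc]
    _ = e * f := by rw [he, hf]

end Aux

/-- A filter (downward directed, upward closed, nonempty subset) in an inverse
semigroup contains an idempotent if and only if it is an inverse subsemigroup. -/
theorem stmt6 {S : Type*} [InvSemigroup S] (F : Set S)
    (hne : F.Nonempty)
    (hup : ∀ a ∈ F, ∀ b : S, nle a b → b ∈ F)
    (hdir : ∀ a ∈ F, ∀ b ∈ F, ∃ c ∈ F, nle c a ∧ nle c b) :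
    (∃ e ∈ F, e * e = e) ↔
      ((∀ a ∈ F, ∀ b ∈ F, a * b ∈ F) ∧ (∀ a ∈ F, a⁻¹ ∈ F)) := by
  constructor
  · rintro ⟨e, heF, he⟩
    constructor
    · intro a ha b hb
      obtain ⟨c, hcF, hca, hcb⟩ := hdir a ha b hb
      obtain ⟨d, hdF, hdc, hde⟩ := hdir c hcF e heF
      have hd : d * d = d := idem_of_nle_idem he hde
      have : nle (d * d) (a * b) :=
        nle_mul (nle_trans hdc hca) (nle_trans hdc hcb)
      rw [hd] at this
      exact hup d hdF _ this
    · intro a ha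
      obtain ⟨c, hcF, hca, hce⟩ := hdir a ha e heF
      have hc : c * c = c := idem_of_nle_idem he hce
      have : nle c a⁻¹ := by
        have := nle_inv hca
        rwa [inv_idem hc] at this
      exact hup c hcF _ this
  · rintro ⟨hmul, hinv⟩
    obtain ⟨a, ha⟩ := hne
    exact ⟨a * a⁻¹, hmul a ha a⁻¹ (hinv a ha), idem_mul_inv a⟩
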